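/- arXiv:2204.04699 — 5 statements merged into one kernel-verified Lean document; each statement's English description precedes it below -/
import Mathlib

section
/- Let V be a vector space of finite dimension n over a field K equipped with a nondegenerate symmetric bilinear form ⟨·,·⟩, and let ξ be an isotropic subspace (ξ ⊆ ξ^⊥). Then for every subspace α of V: [dim((ξ^⊥ ∩ α) + ξ) − dim ξ] + [dim((ξ^⊥ ∩ α^⊥) + ξ) − dim ξ] = dim ξ^⊥ − dim ξ = n − 2 dim ξ. -/
/-!
Since `ξ ≤ ξ^⊥`, modularity gives `dim((ξ^⊥ ∩ α) + ξ) − dim ξ = dim(ξ^⊥ ∩ α) − dim(ξ ∩ α)`.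
Dualising `ξ^⊥ ∩ α = (ξ + α^⊥)^⊥` yields `dim(ξ^⊥ ∩ α) − dim(ξ ∩ α^⊥) = dim α − dim ξ`, and the
same with `α^⊥` in place of `α`. Adding the two, the terms `dim(ξ ∩ α)` and `dim(ξ ∩ α^⊥)` cancel and
`dim α + dim α^⊥ = n` leaves `n − 2 dim ξ`.
-/

open Module

namespace LinearMap.BilinForm

variable {K V : Type*} [Field K] [AddCommGroup V] [Module K V]

theorem orthogonal_sup (B : LinearMap.BilinForm K V) (U T : Submodule K V) :
    B.orthogonal (U ⊔ T) = B.orthogonal U ⊓ B.orthogonal T := by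
  ext x
  simp only [Submodule.mem_inf, mem_orthogonal_iff]
  refine ⟨fun h => ⟨fun u hu => h u (Submodule.mem_sup_left hu),
    fun t ht => h t (Submodule.mem_sup_right ht)⟩, ?_⟩
  rintro ⟨hU, hT⟩ _ hy
  obtain ⟨u, hu, t, ht, rfl⟩ := Submodule.mem_sup.mp hy
  simp only [map_add, LinearMap.add_apply, hU u hu, hT t ht, add_zero]

variable [FiniteDimensional K V] {B : LinearMap.BilinForm K V}

theorem finrank_add_finrank_orthogonal_of_nondegenerate (hB : B.Nondegenerate)
    (W : Submodule K V) : finrank K W + finrank K (B.orthogonal W) = finrank K V := by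
  have := finrank_orthogonal hB W
  have := Submodule.finrank_le W
  omega

theorem finrank_orthogonal_inf_add_finrank (hB : B.Nondegenerate) (hB₀ : B.IsRefl)
    (U T : Submodule K V) :
    finrank K (B.orthogonal U ⊓ T : Submodule K V) + finrank K U
      = finrank K (U ⊓ B.orthogonal T : Submodule K V) + finrank K T := by
  have hdual : B.orthogonal U ⊓ T = B.orthogonal (U ⊔ B.orthogonal T) := by
    rw [orthogonal_sup, orthogonal_orthogonal hB hB₀]
  have hsup := Submodule.finrank_sup_add_finrank_inf_eq U (B.orthogonal T)
  have hdimT := finrank_add_finrank_orthogonal_of_nondegenerate hB T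
  have hdimSup := finrank_add_finrank_orthogonal_of_nondegenerate hB (U ⊔ B.orthogonal T)
  rw [← hdual] at hdimSup
  omega

end LinearMap.BilinForm

theorem Submodule.finrank_inf_sup_add_finrank_inf {K V : Type*} [DivisionRing K]
    [AddCommGroup V] [Module K V] [FiniteDimensional K V] {p q : Submodule K V} (h : p ≤ q)
    (r : Submodule K V) :
    finrank K ((q ⊓ r) ⊔ p : Submodule K V) + finrank K (p ⊓ r : Submodule K V)
      = finrank K (q ⊓ r : Submodule K V) + finrank K p := by
  have hinf : q ⊓ r ⊓ p = p ⊓ r := by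
    rw [inf_comm, ← inf_assoc, inf_eq_left.mpr h]
  rw [← hinf]
  exact Submodule.finrank_sup_add_finrank_inf_eq _ _

open LinearMap.BilinForm in
/-- In an `n`-dimensional nondegenerate orthogonal space `(V, ⟨·,·⟩)` with
an isotropic subspace `ξ ⊆ ξ^⊥`, for every subspace `α`:
`[dim((ξ^⊥ ∩ α) + ξ) − dim ξ] + [dim((ξ^⊥ ∩ α^⊥) + ξ) − dim ξ] = dim ξ^⊥ − dim ξ
 = n − 2 dim ξ`. -/
theorem cleaning_identity_isotropic {K V : Type*} [Field K] [AddCommGroup V]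
    [Module K V] [FiniteDimensional K V]
    (B : LinearMap.BilinForm K V) (hB : B.Nondegenerate)
    (hsymm : ∀ x y : V, B x y = B y x)
    (ξ : Submodule K V) (hξ : ξ ≤ B.orthogonal ξ) (α : Submodule K V) :
    ((finrank K ((B.orthogonal ξ ⊓ α) ⊔ ξ : Submodule K V) : ℤ) - finrank K ξ)
          + ((finrank K ((B.orthogonal ξ ⊓ B.orthogonal α) ⊔ ξ : Submodule K V) : ℤ)
              - finrank K ξ)
        = (finrank K (B.orthogonal ξ) : ℤ) - finrank K ξ ∧
      (finrank K (B.orthogonal ξ) : ℤ) - finrank K ξ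
        = (finrank K V : ℤ) - 2 * finrank K ξ := by
  have hB₀ : B.IsRefl := (isSymm_def.mpr hsymm).isRefl
  have hα := Submodule.finrank_inf_sup_add_finrank_inf hξ α
  have hα' := Submodule.finrank_inf_sup_add_finrank_inf hξ (B.orthogonal α)
  have hdefect := finrank_orthogonal_inf_add_finrank hB hB₀ ξ α
  have hdefect' := finrank_orthogonal_inf_add_finrank hB hB₀ ξ (B.orthogonal α)
  rw [orthogonal_orthogonal hB hB₀] at hdefect'
  have hdimξ := finrank_add_finrank_orthogonal_of_nondegenerate hB ξ
  have hdimα := finrank_add_finrank_orthogonal_of_nondegenerate hB α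
  constructor <;> omega
end

section
/- Let V be a vector space of dimension 2m over a field K equipped with a nondegenerate alternating bilinear form. Then for any Lagrangian subspace α (i.e. α = α^⊥) and any isotropic subspace ξ (i.e. ξ ⊆ ξ^⊥): dim(α ∩ ξ^⊥) − dim(α ∩ ξ) = m − dim ξ = (dim ξ^⊥ − dim ξ)/2. -/
/-!
Since `(U ⊔ W^⊥)^⊥ = U^⊥ ⊓ W` for a nondegenerate reflexive form, the dimension formula for
orthogonal complements together with the Grassmann formula for `U ⊔ W^⊥` gives
`dim (U ⊓ W^⊥) + dim W = dim (U^⊥ ⊓ W) + dim U`. For a Lagrangian `U = α` of dimension `m`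
this is the first identity; the second only uses `dim ξ^⊥ = 2m - dim ξ`.
-/

open Module

namespace LinearMap.BilinForm

theorem orthogonal_sup_s10 {R M : Type*} [CommRing R] [AddCommGroup M] [Module R M]
    (B : LinearMap.BilinForm R M) (U W : Submodule R M) :
    B.orthogonal (U ⊔ W) = B.orthogonal U ⊓ B.orthogonal W := by
  refine le_antisymm (le_inf (B.orthogonal_le le_sup_left) (B.orthogonal_le le_sup_right)) ?_
  rintro x ⟨hxU, hxW⟩
  rw [mem_orthogonal_iff]
  intro y hy
  obtain ⟨u, hu, w, hw, rfl⟩ := Submodule.mem_sup.mp hy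
  rw [map_add, LinearMap.add_apply, hxU u hu, hxW w hw, add_zero]

variable {K V : Type*} [Field K] [AddCommGroup V] [Module K V] [FiniteDimensional K V]
  {B : LinearMap.BilinForm K V}

theorem two_mul_finrank_of_orthogonal_eq (hB : B.Nondegenerate) {U : Submodule K V}
    (hU : B.orthogonal U = U) : 2 * finrank K U = finrank K V := by
  have hdim := B.finrank_orthogonal hB U
  have hle := Submodule.finrank_le U
  rw [hU] at hdim
  omega

theorem finrank_inf_orthogonal_add_finrank (hB : B.Nondegenerate) (hB₀ : B.IsRefl)
    (U W : Submodule K V) :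
    finrank K (U ⊓ B.orthogonal W : Submodule K V) + finrank K W
      = finrank K (B.orthogonal U ⊓ W : Submodule K V) + finrank K U := by
  have hdual : B.orthogonal (U ⊔ B.orthogonal W) = B.orthogonal U ⊓ W := by
    rw [orthogonal_sup_s10, orthogonal_orthogonal hB hB₀]
  have hdim_inf := B.finrank_orthogonal hB (U ⊔ B.orthogonal W)
  rw [hdual] at hdim_inf
  have hgrassmann := Submodule.finrank_sup_add_finrank_inf_eq U (B.orthogonal W)
  have hdim_orth := B.finrank_orthogonal hB W
  have hle_sup := Submodule.finrank_le (U ⊔ B.orthogonal W)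
  have hle_W := Submodule.finrank_le W
  omega

end LinearMap.BilinForm

theorem lagrangian_isotropic_identity_general {K V : Type*} [Field K] [AddCommGroup V]
    [Module K V] [FiniteDimensional K V]
    (B : LinearMap.BilinForm K V) (hB : B.Nondegenerate) (halt : B.IsAlt)
    (m : ℕ) (hdim : finrank K V = 2 * m)
    (α ξ : Submodule K V) (hα : α = B.orthogonal α) :
    (finrank K (α ⊓ B.orthogonal ξ : Submodule K V) : ℤ)
          - finrank K (α ⊓ ξ : Submodule K V)
        = (m : ℤ) - finrank K ξ ∧
      (m : ℤ) - finrank K ξ = ((finrank K (B.orthogonal ξ) : ℤ) - finrank K ξ) / 2 := by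
  have hα_dim := LinearMap.BilinForm.two_mul_finrank_of_orthogonal_eq hB hα.symm
  have hkey := LinearMap.BilinForm.finrank_inf_orthogonal_add_finrank hB halt.isRefl α ξ
  rw [← hα] at hkey
  have hξ_orth := B.finrank_orthogonal hB ξ
  have hξ_le := Submodule.finrank_le ξ
  constructor <;> omega

/-- In a symplectic space of dimension `2m`, for any Lagrangian subspace
`α` and any isotropic subspace `ξ`:
`dim(α ∩ ξ^⊥) − dim(α ∩ ξ) = m − dim ξ = (dim ξ^⊥ − dim ξ)/2`. -/
theorem lagrangian_isotropic_identity {K V : Type*} [Field K] [AddCommGroup V]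
    [Module K V] [FiniteDimensional K V]
    (B : LinearMap.BilinForm K V) (hB : B.Nondegenerate) (halt : B.IsAlt)
    (m : ℕ) (hdim : finrank K V = 2 * m)
    (α ξ : Submodule K V) (hα : α = B.orthogonal α) (hξ : ξ ≤ B.orthogonal ξ) :
    (finrank K (α ⊓ B.orthogonal ξ : Submodule K V) : ℤ)
          - finrank K (α ⊓ ξ : Submodule K V)
        = (m : ℤ) - finrank K ξ ∧
      (m : ℤ) - finrank K ξ = ((finrank K (B.orthogonal ξ) : ℤ) - finrank K ξ) / 2 :=
  lagrangian_isotropic_identity_general B hB halt m hdim α ξ hα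
end

section
/- Let P be a vector space over 𝔽₂ of dimension 2n equipped with a nondegenerate alternating bilinear form, and let S be an isotropic subspace (S ⊆ S^⊥) with dim S = n − k. Then for every subspace α of P: [dim((α ∩ S^⊥) + S) − dim S] + [dim((α^⊥ ∩ S^⊥) + S) − dim S] = 2k. -/
/-!
Since `S ≤ S^⊥`, the modular law turns the first bracket into `dim (α ∩ S^⊥) - dim (α ∩ S)`,
and likewise the second into `dim (α^⊥ ∩ S^⊥) - dim (α^⊥ ∩ S)`. Nondegeneracy gives
`S = (S^⊥)^⊥`, so `α^⊥ ∩ S^⊥ = (α + S)^⊥` and `α^⊥ ∩ S = (α + S^⊥)^⊥`, and `dim W^⊥ = 2n - dim W`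
turns the second bracket into `dim (α + S^⊥) - dim (α + S)`. Adding, Grassmann's formula leaves
`dim S^⊥ - dim S = 2n - 2 dim S = 2k`.
-/

open Module
open LinearMap (BilinForm)

section

variable {K V : Type*} [Field K] [AddCommGroup V] [Module K V] [FiniteDimensional K V]

theorem Submodule.finrank_inf_sup_sub_finrank_of_le {S T : Submodule K V} (hST : S ≤ T)
    (α : Submodule K V) :
    (finrank K ((α ⊓ T) ⊔ S : Submodule K V) : ℤ) - finrank K S
      = finrank K (α ⊓ T : Submodule K V) - finrank K (α ⊓ S : Submodule K V) := by
  have h := Submodule.finrank_sup_add_finrank_inf_eq (α ⊓ T) S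
  rw [inf_assoc, inf_eq_right.mpr hST] at h
  omega

namespace LinearMap.BilinForm

theorem orthogonal_sup_s11 {R M : Type*} [CommSemiring R] [AddCommMonoid M] [Module R M]
    (B : BilinForm R M) (N L : Submodule R M) :
    B.orthogonal (N ⊔ L) = B.orthogonal N ⊓ B.orthogonal L := by
  ext x
  simp only [Submodule.mem_inf, mem_orthogonal_iff]
  refine ⟨fun h => ⟨fun y hy => h y (Submodule.mem_sup_left hy),
    fun y hy => h y (Submodule.mem_sup_right hy)⟩, ?_⟩
  rintro ⟨hN, hL⟩ y hy
  obtain ⟨a, ha, c, hc, rfl⟩ := Submodule.mem_sup.mp hy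
  rw [map_add, LinearMap.add_apply, hN a ha, hL c hc, add_zero]

theorem finrank_orthogonal_add_finrank {B : BilinForm K V} (hB : B.Nondegenerate)
    (W : Submodule K V) : finrank K (B.orthogonal W) + finrank K W = finrank K V := by
  have := W.finrank_le
  rw [finrank_orthogonal hB]
  omega

theorem finrank_inf_orthogonal_sub_finrank_inf {B : BilinForm K V} (hB : B.Nondegenerate)
    (hR : B.IsRefl) (S α : Submodule K V) :
    (finrank K (B.orthogonal α ⊓ B.orthogonal S : Submodule K V) : ℤ)
        - finrank K (B.orthogonal α ⊓ S : Submodule K V)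
      = finrank K (α ⊔ B.orthogonal S : Submodule K V) - finrank K (α ⊔ S : Submodule K V) := by
  have hS : B.orthogonal α ⊓ S = B.orthogonal (α ⊔ B.orthogonal S) := by
    rw [orthogonal_sup_s11, B.orthogonal_orthogonal hB hR]
  rw [← orthogonal_sup_s11, hS]
  have h₁ := finrank_orthogonal_add_finrank hB (α ⊔ S)
  have h₂ := finrank_orthogonal_add_finrank hB (α ⊔ B.orthogonal S)
  omega

theorem finrank_cleaning_add_finrank_cleaning_orthogonal {B : BilinForm K V}
    (hB : B.Nondegenerate) (hR : B.IsRefl) {S : Submodule K V} (hS : S ≤ B.orthogonal S)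
    (α : Submodule K V) :
    ((finrank K ((α ⊓ B.orthogonal S) ⊔ S : Submodule K V) : ℤ) - finrank K S)
        + ((finrank K ((B.orthogonal α ⊓ B.orthogonal S) ⊔ S : Submodule K V) : ℤ)
          - finrank K S)
      = finrank K (B.orthogonal S) - finrank K S := by
  rw [Submodule.finrank_inf_sup_sub_finrank_of_le hS,
    Submodule.finrank_inf_sup_sub_finrank_of_le hS,
    finrank_inf_orthogonal_sub_finrank_inf hB hR]
  have hα := Submodule.finrank_sup_add_finrank_inf_eq α S
  have hα' := Submodule.finrank_sup_add_finrank_inf_eq α (B.orthogonal S)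
  omega

end LinearMap.BilinForm

end

/-- Cleaning Lemma for stabilizer codes, quantitative form.
For a `2n`-dimensional symplectic 𝔽₂-space `P` and an isotropic subspace `S` with
`dim S = n − k`, for every subspace `α`:
`[dim((α ∩ S^⊥) + S) − dim S] + [dim((α^⊥ ∩ S^⊥) + S) − dim S] = 2k`. -/
theorem cleaning_identity_stabilizer {P : Type*} [AddCommGroup P] [Module (ZMod 2) P]
    [FiniteDimensional (ZMod 2) P] (n k : ℕ) (hP : finrank (ZMod 2) P = 2 * n)
    (B : LinearMap.BilinForm (ZMod 2) P) (hB : B.Nondegenerate) (halt : B.IsAlt)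
    (S : Submodule (ZMod 2) P) (hS : S ≤ B.orthogonal S)
    (hdimS : (finrank (ZMod 2) S : ℤ) = (n : ℤ) - k)
    (α : Submodule (ZMod 2) P) :
    ((finrank (ZMod 2) ((α ⊓ B.orthogonal S) ⊔ S : Submodule (ZMod 2) P) : ℤ)
          - finrank (ZMod 2) S)
        + ((finrank (ZMod 2) ((B.orthogonal α ⊓ B.orthogonal S) ⊔ S :
              Submodule (ZMod 2) P) : ℤ) - finrank (ZMod 2) S)
      = 2 * k := by
  rw [B.finrank_cleaning_add_finrank_cleaning_orthogonal hB halt.isRefl hS α]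
  have hSperp := B.finrank_orthogonal_add_finrank hB S
  omega
end

section
/- Let P be a vector space over 𝔽₂ of dimension 2n with a nondegenerate alternating bilinear form, and let S be an isotropic subspace (S ⊆ S^⊥) with dim S = n − k. Let α be a subspace of P such that α ∩ S^⊥ ⊆ S. Then for every v ∈ S^⊥ there exists v' ∈ S^⊥ ∩ α^⊥ such that v − v' ∈ S. -/
open Module

/-
Taking orthogonal complements turns the claim `S^⊥ = S + (S^⊥ ∩ α^⊥)` into
`S = S^⊥ ∩ (S + α)`. Since `S ≤ S^⊥`, the modular law gives
`S^⊥ ∩ (S + α) = S + (α ∩ S^⊥)`, which is `S` because `α` is correctable.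
-/

namespace LinearMap.BilinForm

section

variable {R M : Type*} [CommRing R] [AddCommGroup M] [Module R M] (B : LinearMap.BilinForm R M)

theorem orthogonal_sup_s12 (X Y : Submodule R M) :
    B.orthogonal (X ⊔ Y) = B.orthogonal X ⊓ B.orthogonal Y := by
  refine le_antisymm (le_inf (B.orthogonal_le le_sup_left) (B.orthogonal_le le_sup_right)) ?_
  rintro x ⟨hX, hY⟩ z hz
  have hker : X ⊔ Y ≤ LinearMap.ker (B.flip x) := sup_le (fun y hy => hX y hy) fun y hy => hY y hy
  exact hker hz

end

section

variable {K V : Type*} [Field K] [AddCommGroup V] [Module K V] [FiniteDimensional K V]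
  (B : LinearMap.BilinForm K V)

theorem orthogonal_inf (hB : B.Nondegenerate) (hrefl : B.IsRefl) (X Y : Submodule K V) :
    B.orthogonal (X ⊓ Y) = B.orthogonal X ⊔ B.orthogonal Y := by
  conv_lhs => rw [← B.orthogonal_orthogonal hB hrefl X, ← B.orthogonal_orthogonal hB hrefl Y,
    ← B.orthogonal_sup_s12, B.orthogonal_orthogonal hB hrefl]

theorem sup_orthogonal_inf_orthogonal_eq_orthogonal (hB : B.Nondegenerate) (hrefl : B.IsRefl)
    {S α : Submodule K V} (hS : S ≤ B.orthogonal S) (hα : α ⊓ B.orthogonal S ≤ S) :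
    S ⊔ (B.orthogonal S ⊓ B.orthogonal α) = B.orthogonal S := by
  have hperp : B.orthogonal (S ⊔ (B.orthogonal S ⊓ B.orthogonal α)) = S := by
    rw [B.orthogonal_sup_s12, B.orthogonal_inf hB hrefl, B.orthogonal_orthogonal hB hrefl,
      B.orthogonal_orthogonal hB hrefl, inf_comm, sup_inf_assoc_of_le α hS]
    exact sup_eq_left.mpr hα
  rw [← B.orthogonal_orthogonal hB hrefl (S ⊔ _), hperp]

end

end LinearMap.BilinForm

theorem cleaning_lemma_stabilizer_general {P : Type*} [AddCommGroup P] [Module (ZMod 2) P]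
    [FiniteDimensional (ZMod 2) P]
    (B : LinearMap.BilinForm (ZMod 2) P) (hB : B.Nondegenerate) (halt : B.IsAlt)
    (S : Submodule (ZMod 2) P) (hS : S ≤ B.orthogonal S)
    (α : Submodule (ZMod 2) P) (hcorr : α ⊓ B.orthogonal S ≤ S) :
    ∀ v ∈ B.orthogonal S, ∃ v' ∈ B.orthogonal S ⊓ B.orthogonal α, v - v' ∈ S := by
  intro v hv
  rw [← B.sup_orthogonal_inf_orthogonal_eq_orthogonal hB halt.isRefl hS hcorr] at hv
  obtain ⟨s, hs, w, hw, rfl⟩ := Submodule.mem_sup.mp hv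
  exact ⟨w, hw, by rwa [add_sub_cancel_right]⟩

/-- Cleaning Lemma for stabilizer codes, qualitative form.
For a `2n`-dimensional symplectic 𝔽₂-space `P`, an isotropic subspace `S` with
`dim S = n − k`, and a subspace `α` with `α ∩ S^⊥ ⊆ S` (a correctable region),
every `v ∈ S^⊥` can be "cleaned": there is `v' ∈ S^⊥ ∩ α^⊥` with `v − v' ∈ S`. -/
theorem cleaning_lemma_stabilizer {P : Type*} [AddCommGroup P] [Module (ZMod 2) P]
    [FiniteDimensional (ZMod 2) P] (n k : ℕ) (hP : finrank (ZMod 2) P = 2 * n)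
    (B : LinearMap.BilinForm (ZMod 2) P) (hB : B.Nondegenerate) (halt : B.IsAlt)
    (S : Submodule (ZMod 2) P) (hS : S ≤ B.orthogonal S)
    (hdimS : (finrank (ZMod 2) S : ℤ) = (n : ℤ) - k)
    (α : Submodule (ZMod 2) P) (hcorr : α ⊓ B.orthogonal S ≤ S) :
    ∀ v ∈ B.orthogonal S, ∃ v' ∈ B.orthogonal S ⊓ B.orthogonal α, v - v' ∈ S :=
  cleaning_lemma_stabilizer_general B hB halt S hS α hcorr
end

section
/- For j = 1,…,n let G_j be a finite commutative group with a nondegenerate involutive bicharacter ⟨·,·⟩_j, let G = G₁ × ⋯ × G_n with the product bicharacter ⟨g,g'⟩ = ∏ⱼ ⟨g_j,g'_j⟩_j (which is nondegenerate and involutive), and for a subgroup K of G let K† = {g | ⟨h,g⟩ = 1 for all h ∈ K}. For M ⊆ {1,…,n} let B_M = {g ∈ G | g_j = 1 for all j ∉ M}; then (B_M)† = B_{M^c}, where M^c is the complement of M. If H is a subgroup of G with H ⊆ H†, then for every M ⊆ {1,…,n}: |(B_M ∩ H†)/(B_M ∩ H)| · |(B_{M^c} ∩ H†)/(B_{M^c}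 ∩ H)| = |H†/H|, where |·| denotes the cardinality of the quotient group. -/
/-- For a bicharacter `χ` on a commutative group `G` and a subgroup `K`, the subgroup
`K† = {g ∈ G | ⟨h,g⟩ = 1 for all h ∈ K}`. -/
def bidual {G : Type*} [CommGroup G] (χ : G → (G →* ℂˣ)) (K : Subgroup G) : Subgroup G where
  carrier := {g | ∀ h ∈ K, χ h g = 1}
  one_mem' := fun h _ => map_one (χ h)
  mul_mem' := fun {a b} ha hb h hK => by rw [map_mul, ha h hK, hb h hK, one_mul]
  inv_mem' := fun {a} ha h hK => by rw [map_inv, ha h hK, inv_one]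

/-- The product bicharacter `⟨g,g'⟩ = ∏ⱼ ⟨gⱼ,g'ⱼ⟩ⱼ` on `G = G₁ × ⋯ × G_n`. -/
def prodBichar {n : ℕ} {G : Fin n → Type*} [∀ j, CommGroup (G j)]
    (e : ∀ j, G j →* (G j →* ℂˣ)) : (∀ j, G j) →* ((∀ j, G j) →* ℂˣ) :=
  MonoidHom.mk'
    (fun g => MonoidHom.mk' (fun g' => ∏ j, e j (g j) (g' j))
      (fun a b => by simp [Pi.mul_apply, map_mul, Finset.prod_mul_distrib]))
    (fun a b => by
      ext g'
      simp [Pi.mul_apply, map_mul, MonoidHom.mul_apply, Finset.prod_mul_distrib])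

/-- The subgroup `B_M = {g | gⱼ = 1 for all j ∉ M}` of elements supported on `M`. -/
def suppSubgroup {n : ℕ} (G : Fin n → Type*) [∀ j, CommGroup (G j)] (M : Set (Fin n)) :
    Subgroup (∀ j, G j) where
  carrier := {g | ∀ j ∉ M, g j = 1}
  one_mem' := fun _ _ => rfl
  mul_mem' := fun {a b} ha hb j hj => by rw [Pi.mul_apply, ha j hj, hb j hj, one_mul]
  inv_mem' := fun {a} ha j hj => by rw [Pi.inv_apply, ha j hj, inv_one]

/-! The dual `K†` of a subgroup is the preimage, under the isomorphism `g ↦ ⟨·, g⟩` onto the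
character group, of the characters trivial on `K`; these are the characters of `Γ ⧸ K`, so
`|K†| · |K| = |Γ|`. Since `(K ⊔ L)† = K† ⊓ L†`, with `A = B_M`, `B = B_{Mᶜ} = A†` and `D = H†`
we get `|A ⊓ D| · |B ⊔ H| = |Γ| = |B ⊓ D| · |A ⊔ H|`, and together with
`|K ⊔ H| · |K ⊓ H| = |K| · |H|` and `|A| · |B| = |Γ|` both sides of the identity become
`|Γ| / |H|²`. -/

open Function

@[simp]
lemma mem_bidual {G : Type*} [CommGroup G] {χ : G → (G →* ℂˣ)} {K : Subgroup G} {g : G} :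
    g ∈ bidual χ K ↔ ∀ h ∈ K, χ h g = 1 := Iff.rfl

lemma bidual_sup {Γ : Type*} [CommGroup Γ] (χ : Γ →* (Γ →* ℂˣ)) (K L : Subgroup Γ) :
    bidual χ (K ⊔ L) = bidual χ K ⊓ bidual χ L := by
  ext g
  simp only [Subgroup.mem_inf, mem_bidual]
  refine ⟨fun hg => ⟨fun h hh => hg h (Subgroup.mem_sup_left hh),
    fun h hh => hg h (Subgroup.mem_sup_right hh)⟩, ?_⟩
  rintro ⟨hK, hL⟩ x hx
  obtain ⟨y, hy, z, hz, rfl⟩ := Subgroup.mem_sup.mp hx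
  rw [map_mul, MonoidHom.mul_apply, hK y hy, hL z hz, one_mul]

section Group

variable {Γ : Type*} [Group Γ]

lemma Subgroup.relIndex_mul_card {K L : Subgroup Γ} (h : K ≤ L) :
    K.relIndex L * Nat.card K = Nat.card L := by
  rw [Subgroup.relIndex, ← Nat.card_congr (Subgroup.subgroupOfEquivOfLe h).toEquiv]
  exact Subgroup.index_mul_card (K.subgroupOf L)

lemma Subgroup.card_sup_mul_card_inf (K L : Subgroup Γ) [L.Normal] :
    Nat.card (K ⊔ L : Subgroup Γ) * Nat.card (K ⊓ L : Subgroup Γ) = Nat.card K * Nat.card L := by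
  rw [← Subgroup.relIndex_mul_card (le_sup_right : L ≤ K ⊔ L), Subgroup.relIndex_sup_right,
    ← Subgroup.inf_relIndex_left, ← Subgroup.relIndex_mul_card (inf_le_left : K ⊓ L ≤ K)]
  ring

end Group

section Bicharacter

variable {Γ : Type*} [CommGroup Γ] [Finite Γ] {χ : Γ →* (Γ →* ℂˣ)}

lemma eq_one_of_forall_apply_eq_one {χ : Γ → (Γ →* ℂˣ)} (hχ : Surjective χ) {x : Γ}
    (hx : ∀ a, χ a x = 1) : x = 1 := by
  by_contra hne
  obtain ⟨φ, hφ⟩ := CommGroup.exists_apply_ne_one_of_hasEnoughRootsOfUnity Γ ℂ hne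
  obtain ⟨a, rfl⟩ := hχ φ
  exact hφ (hx a)

lemma bijective_flip_of_bidual_top (hχ : bidual χ ⊤ = ⊥) : Bijective χ.flip := by
  have hinj : Injective χ.flip := by
    refine (injective_iff_map_eq_one _).mpr fun g hg => ?_
    rw [← Subgroup.mem_bot, ← hχ]
    exact fun h _ => DFunLike.congr_fun hg h
  exact (Nat.bijective_iff_injective_and_card _).mpr
    ⟨hinj, (CommGroup.card_monoidHom_of_hasEnoughRootsOfUnity Γ ℂ).symm⟩

lemma card_bidual (hχ : Bijective χ.flip) (K : Subgroup Γ) :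
    Nat.card (bidual χ K) = K.index := by
  have hcomap : bidual χ K = (MonoidHom.domRestrictHom K ℂˣ).ker.comap χ.flip := by
    ext g
    simp [MonoidHom.ext_iff]
  rw [hcomap, ← Subgroup.card_map_of_injective hχ.injective,
    Subgroup.map_comap_eq_self_of_surjective hχ.surjective,
    CommGroup.card_domRestrictHom_ker, Subgroup.index_eq_card]

lemma card_bidual_mul_card (hχ : Bijective χ.flip) (K : Subgroup Γ) :
    Nat.card (bidual χ K) * Nat.card K = Nat.card Γ := by
  rw [card_bidual hχ, Subgroup.index_mul_card]

theorem relIndex_inf_bidual_mul_relIndex_inf_bidual (hχ : Bijective χ.flip)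
    {A B H : Subgroup Γ} (hA : bidual χ A = B) (hB : bidual χ B = A) (hH : H ≤ bidual χ H) :
    (A ⊓ H).relIndex (A ⊓ bidual χ H) * (B ⊓ H).relIndex (B ⊓ bidual χ H) =
      H.relIndex (bidual χ H) := by
  set D := bidual χ H
  have hAD : Nat.card (A ⊓ D : Subgroup Γ) * Nat.card (B ⊔ H : Subgroup Γ) = Nat.card Γ := by
    rw [← card_bidual_mul_card hχ (B ⊔ H), bidual_sup, hB]
  have hBD : Nat.card (B ⊓ D : Subgroup Γ) * Nat.card (A ⊔ H : Subgroup Γ) = Nat.card Γ := by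
    rw [← card_bidual_mul_card hχ (A ⊔ H), bidual_sup, hA]
  have hAB : Nat.card A * Nat.card B = Nat.card Γ := by
    rw [← hA, mul_comm, card_bidual_mul_card hχ]
  have hpos : 0 < Nat.card Γ * Nat.card H ^ 2 := Nat.mul_pos Nat.card_pos (pow_pos Nat.card_pos 2)
  refine Nat.eq_of_mul_eq_mul_right hpos ?_
  calc (A ⊓ H).relIndex (A ⊓ D) * (B ⊓ H).relIndex (B ⊓ D) * (Nat.card Γ * Nat.card H ^ 2)
      = (A ⊓ H).relIndex (A ⊓ D) * (B ⊓ H).relIndex (B ⊓ D) *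
          (Nat.card A * Nat.card H * (Nat.card B * Nat.card H)) := by rw [← hAB]; ring
    _ = ((A ⊓ H).relIndex (A ⊓ D) * Nat.card (A ⊓ H : Subgroup Γ)) * Nat.card (B ⊔ H : Subgroup Γ) *
          (((B ⊓ H).relIndex (B ⊓ D) * Nat.card (B ⊓ H : Subgroup Γ)) *
            Nat.card (A ⊔ H : Subgroup Γ)) := by
        rw [← Subgroup.card_sup_mul_card_inf A H, ← Subgroup.card_sup_mul_card_inf B H]; ring
    _ = Nat.card Γ * Nat.card Γ := by
        rw [Subgroup.relIndex_mul_card (inf_le_inf_left A hH),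
          Subgroup.relIndex_mul_card (inf_le_inf_left B hH), hAD, hBD]
    _ = H.relIndex D * (Nat.card Γ * Nat.card H ^ 2) := by
        rw [← card_bidual_mul_card hχ H, ← Subgroup.relIndex_mul_card hH]; ring

end Bicharacter

section ProductGroup

variable {n : ℕ} {G : Fin n → Type*} [∀ j, CommGroup (G j)]

@[simp]
lemma mem_suppSubgroup {M : Set (Fin n)} {g : ∀ j, G j} :
    g ∈ suppSubgroup G M ↔ ∀ j ∉ M, g j = 1 := Iff.rfl

@[simp]
lemma suppSubgroup_univ : suppSubgroup G Set.univ = ⊤ := by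
  ext g
  simp

@[simp]
lemma suppSubgroup_empty : suppSubgroup G ∅ = ⊥ := by
  ext g
  simp [funext_iff]

lemma prodBichar_apply (e : ∀ j, G j →* (G j →* ℂˣ)) (g g' : ∀ j, G j) :
    prodBichar e g g' = ∏ j, e j (g j) (g' j) := rfl

lemma prodBichar_mulSingle (e : ∀ j, G j →* (G j →* ℂˣ)) (j : Fin n) (a : G j)
    (g : ∀ i, G i) : prodBichar e (Pi.mulSingle j a) g = e j a (g j) := by
  classical
  rw [prodBichar_apply, Fintype.prod_eq_single j fun i hi => by simp [Pi.mulSingle_eq_of_ne hi],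
    Pi.mulSingle_eq_same]

lemma bidual_suppSubgroup [∀ j, Finite (G j)] {e : ∀ j, G j →* (G j →* ℂˣ)}
    (he : ∀ j, Surjective (e j)) (M : Set (Fin n)) :
    bidual (prodBichar e) (suppSubgroup G M) = suppSubgroup G Mᶜ := by
  classical
  ext g
  simp only [mem_bidual, mem_suppSubgroup, Set.mem_compl_iff, not_not]
  constructor
  · intro hg j hj
    refine eq_one_of_forall_apply_eq_one (he j) fun a => ?_
    rw [← prodBichar_mulSingle]
    exact hg _ fun i hi => Pi.mulSingle_eq_of_ne (ne_of_mem_of_not_mem hj hi).symm a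
  · intro hg h hh
    refine (prodBichar_apply e h g).trans <| Finset.prod_eq_one fun i _ => ?_
    by_cases hi : i ∈ M
    · rw [hg i hi, map_one]
    · rw [hh i hi, map_one, MonoidHom.one_apply]

end ProductGroup

theorem cleaning_identity_product_group_general {n : ℕ} {G : Fin n → Type*}
    [∀ j, CommGroup (G j)] [∀ j, Fintype (G j)]
    (e : ∀ j, G j ≃* (G j →* ℂˣ))
    (H : Subgroup (∀ j, G j))
    (hH : H ≤ bidual (prodBichar fun j => (e j : G j →* (G j →* ℂˣ))) H) :
    (∀ M : Set (Fin n),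
        bidual (prodBichar fun j => (e j : G j →* (G j →* ℂˣ))) (suppSubgroup G M)
          = suppSubgroup G Mᶜ) ∧
      ∀ M : Set (Fin n),
        (suppSubgroup G M ⊓ H).relIndex
            (suppSubgroup G M ⊓ bidual (prodBichar fun j => (e j : G j →* (G j →* ℂˣ))) H)
          * (suppSubgroup G Mᶜ ⊓ H).relIndex
              (suppSubgroup G Mᶜ ⊓
                bidual (prodBichar fun j => (e j : G j →* (G j →* ℂˣ))) H)
          = H.relIndex (bidual (prodBichar fun j => (e j : G j →* (G j →* ℂˣ))) H) := by
  have hdual : ∀ M : Set (Fin n),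
      bidual (prodBichar fun j => (e j : G j →* (G j →* ℂˣ))) (suppSubgroup G M)
        = suppSubgroup G Mᶜ :=
    bidual_suppSubgroup fun j => (e j).surjective
  have hflip := bijective_flip_of_bidual_top (by simpa using hdual Set.univ)
  refine ⟨hdual, fun M => relIndex_inf_bidual_mul_relIndex_inf_bidual hflip (hdual M) ?_ hH⟩
  rw [hdual, compl_compl]

/-- Cleaning Lemma for a product of finite abelian groups.
For finite commutative groups `G_j` with nondegenerate involutive bicharacters `e j`,
the product bicharacter on `G = ∏ⱼ G_j` satisfies `(B_M)† = B_{Mᶜ}`, and for any subgroup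
`H` with `H ⊆ H†` and any `M ⊆ {1,…,n}`:
`|(B_M ∩ H†)/(B_M ∩ H)| · |(B_{Mᶜ} ∩ H†)/(B_{Mᶜ} ∩ H)| = |H†/H|`. -/
theorem cleaning_identity_product_group {n : ℕ} {G : Fin n → Type*}
    [∀ j, CommGroup (G j)] [∀ j, Fintype (G j)]
    (e : ∀ j, G j ≃* (G j →* ℂˣ))
    (hinvol : ∀ (j) (g g' : G j), e j g g' = 1 ↔ e j g' g = 1)
    (H : Subgroup (∀ j, G j))
    (hH : H ≤ bidual (prodBichar fun j => (e j : G j →* (G j →* ℂˣ))) H) :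
    (∀ M : Set (Fin n),
        bidual (prodBichar fun j => (e j : G j →* (G j →* ℂˣ))) (suppSubgroup G M)
          = suppSubgroup G Mᶜ) ∧
      ∀ M : Set (Fin n),
        (suppSubgroup G M ⊓ H).relIndex
            (suppSubgroup G M ⊓ bidual (prodBichar fun j => (e j : G j →* (G j →* ℂˣ))) H)
          * (suppSubgroup G Mᶜ ⊓ H).relIndex
              (suppSubgroup G Mᶜ ⊓
                bidual (prodBichar fun j => (e j : G j →* (G j →* ℂˣ))) H)
          = H.relIndex (bidual (prodBichar fun j => (e j : G j →* (G j →* ℂˣ))) H) :=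
  cleaning_identity_product_group_general e H hH
end
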